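/- Let k: ℝ² → ℝ be a solution of the scalar mKdV k_t = -(k_{xxx} + (3/2)k²k_x), and suppose g = (e₁,e₂): ℝ² → SO(2) satisfies g⁻¹g_x = [[0,-k],[k,0]] and g⁻¹g_t = [[0, k_{xx}+(1/2)k³],[-(k_{xx}+(1/2)k³), 0]]. Define γ(x,t) = ∫₀ᵗ Z(0,s)ds + ∫₀ˣ e₁(ξ,t)dξ with Z = -((k²/2)e₁ + k_x e₂). Then γ_t = Z, γ_x = e₁, ‖γ_x‖ = 1, and the curvature of γ(·,t) with respect to the frame g(·,t) is k(·,t). -/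

import Mathlib

open scoped BigOperators
open Matrix

noncomputable def pdx (f : ℝ → ℝ → ℝ) : ℝ → ℝ → ℝ := fun x t => deriv (fun x' => f x' t) x
noncomputable def pdt (f : ℝ → ℝ → ℝ) : ℝ → ℝ → ℝ := fun x t => deriv (fun t' => f x t') t

noncomputable def mdx {N : ℕ} (f : ℝ → ℝ → Matrix (Fin N) (Fin N) ℝ) (x t : ℝ) :
    Matrix (Fin N) (Fin N) ℝ :=
  Matrix.of fun i j => deriv (fun x' => f x' t i j) x

noncomputable def mdt {N : ℕ} (f : ℝ → ℝ → Matrix (Fin N) (Fin N) ℝ) (x t : ℝ) :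
    Matrix (Fin N) (Fin N) ℝ :=
  Matrix.of fun i j => deriv (fun t' => f x t' i j) t

/-- the `j`-th column of a frame `g`, as a vector in ℝ² -/
noncomputable def colv (g : ℝ → ℝ → Matrix (Fin 2) (Fin 2) ℝ) (j : Fin 2)
    (x t : ℝ) : EuclideanSpace ℝ (Fin 2) := WithLp.toLp 2 (fun i => g x t i j)

section helpers

lemma diffAt_x {F : ℝ → ℝ → ℝ} (hF : ContDiff ℝ (⊤ : ℕ∞) fun p : ℝ × ℝ => F p.1 p.2) (x t : ℝ) :
    DifferentiableAt ℝ (fun x' => F x' t) x := by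
  have := (hF.differentiable (by simp) (x, t)).comp x ((differentiableAt_id : DifferentiableAt ℝ id x).prodMk (differentiableAt_const t)); exact this

lemma diffAt_t {F : ℝ → ℝ → ℝ} (hF : ContDiff ℝ (⊤ : ℕ∞) fun p : ℝ × ℝ => F p.1 p.2) (x t : ℝ) :
    DifferentiableAt ℝ (fun t' => F x t') t :=
  (hF.differentiable (by simp) (x, t)).comp t ((differentiableAt_const x).prodMk differentiableAt_id)

lemma hasDerivAt_pdx {F : ℝ → ℝ → ℝ} (hF : ContDiff ℝ (⊤ : ℕ∞) fun p : ℝ × ℝ => F p.1 p.2) (x t : ℝ) :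
    HasDerivAt (fun x' => F x' t) (pdx F x t) x :=
  (diffAt_x hF x t).hasDerivAt

lemma hasDerivAt_pdt {F : ℝ → ℝ → ℝ} (hF : ContDiff ℝ (⊤ : ℕ∞) fun p : ℝ × ℝ => F p.1 p.2) (x t : ℝ) :
    HasDerivAt (fun t' => F x t') (pdt F x t) t :=
  (diffAt_t hF x t).hasDerivAt

lemma pdx_eq_fderiv {F : ℝ → ℝ → ℝ} (hF : ContDiff ℝ (⊤ : ℕ∞) fun p : ℝ × ℝ => F p.1 p.2) (x t : ℝ) :
    pdx F x t = fderiv ℝ (fun p : ℝ × ℝ => F p.1 p.2) (x, t) (1, 0) := by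
  have h1 : HasDerivAt (fun x' => F x' t)
      (fderiv ℝ (fun p : ℝ × ℝ => F p.1 p.2) (x, t) (1, 0)) x := by
    have := (hF.differentiable (by simp) (x, t)).hasFDerivAt.comp_hasDerivAt x
      ((hasDerivAt_id x).prodMk (hasDerivAt_const x t)); exact this
  exact h1.deriv.symm ▸ rfl

lemma contDiff_pdx {F : ℝ → ℝ → ℝ} (hF : ContDiff ℝ (⊤ : ℕ∞) fun p : ℝ × ℝ => F p.1 p.2) :
    ContDiff ℝ (⊤ : ℕ∞) fun p : ℝ × ℝ => pdx F p.1 p.2 := by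
  have : (fun p : ℝ × ℝ => pdx F p.1 p.2)
      = fun p : ℝ × ℝ => fderiv ℝ (fun q : ℝ × ℝ => F q.1 q.2) p (1, 0) := by
    funext p; exact pdx_eq_fderiv hF p.1 p.2
  rw [this]
  exact (hF.fderiv_right (by simp)).clm_apply contDiff_const

lemma hasDerivAt_euclidean {n : ℕ} {f : ℝ → EuclideanSpace ℝ (Fin n)}
    {v : EuclideanSpace ℝ (Fin n)} {x : ℝ}
    (h : ∀ i, HasDerivAt (fun y => f y i) (v i) x) : HasDerivAt f v x := by
  have h2 : HasDerivAt (fun y => (fun i => f y i : Fin n → ℝ)) (fun i => v i) x :=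
    hasDerivAt_pi.mpr h
  exact ((EuclideanSpace.equiv (Fin n) ℝ).symm.toContinuousLinearMap.hasFDerivAt.comp_hasDerivAt
    x h2 : _)

lemma continuous_euclidean {n : ℕ} {α : Type*} [TopologicalSpace α]
    {f : α → EuclideanSpace ℝ (Fin n)} (h : ∀ i, Continuous fun y => f y i) : Continuous f :=
  ((EuclideanSpace.equiv (Fin n) ℝ).symm.continuous.comp (continuous_pi h) : _)

end helpers

/-- n = 2 correspondence: from a solution `k` of the scalar mKdV and a
frame `g = (e₁,e₂) : ℝ² → SO(2)` of the associated Lax pair, the curve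
`γ(x,t) = ∫₀ᵗ Z(0,s)ds + ∫₀ˣ e₁(ξ,t)dξ` with `Z = -((k²/2)e₁ + k_x e₂)` satisfies
`γ_t = Z`, `γ_x = e₁`, `‖γ_x‖ = 1`, and has curvature `k` with respect to `g`. -/
theorem stmt19
    (k : ℝ → ℝ → ℝ)
    (g : ℝ → ℝ → Matrix (Fin 2) (Fin 2) ℝ)
    (hk : ContDiff ℝ (⊤ : ℕ∞) fun (p : ℝ × ℝ) => k p.1 p.2)
    (hg : ∀ i j, ContDiff ℝ (⊤ : ℕ∞) fun (p : ℝ × ℝ) => g p.1 p.2 i j)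
    -- `k` solves the scalar mKdV
    (hmkdv : ∀ x t, pdt k x t =
      -(pdx (pdx (pdx k)) x t + (3 / 2) * (k x t) ^ 2 * pdx k x t))
    -- `g : ℝ² → SO(2)` solves the Lax pair
    (hSO : ∀ x t, (g x t)ᵀ * g x t = 1 ∧ (g x t).det = 1)
    (hgx : ∀ x t, (g x t)ᵀ * mdx g x t = !![0, -(k x t); k x t, 0])
    (hgt : ∀ x t, (g x t)ᵀ * mdt g x t =
      !![0, pdx (pdx k) x t + (1 / 2) * (k x t) ^ 3;
         -(pdx (pdx k) x t + (1 / 2) * (k x t) ^ 3), 0])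
    -- `Z = -((k²/2)e₁ + k_x e₂)`
    (Z : ℝ → ℝ → EuclideanSpace ℝ (Fin 2))
    (hZ : ∀ x t, Z x t =
      -(((k x t) ^ 2 / 2) • colv g 0 x t + pdx k x t • colv g 1 x t))
    -- `γ(x,t) = ∫₀ᵗ Z(0,s)ds + ∫₀ˣ e₁(ξ,t)dξ`
    (γ : ℝ → ℝ → EuclideanSpace ℝ (Fin 2))
    (hγ : ∀ x t, γ x t = (∫ s in (0 : ℝ)..t, Z 0 s) + ∫ s in (0 : ℝ)..x, colv g 0 s t) :
    (∀ x t, HasDerivAt (fun t' => γ x t') (Z x t) t) ∧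
    (∀ x t, HasDerivAt (fun x' => γ x' t) (colv g 0 x t) x) ∧
    (∀ x t, ‖deriv (fun x' => γ x' t) x‖ = 1) ∧
    -- curvature: `(e₁)_x = k e₂`
    (∀ x t, deriv (fun x' => colv g 0 x' t) x = k x t • colv g 1 x t) := by
  -- abbreviations
  set β : ℝ → ℝ → ℝ := fun x t => pdx (pdx k) x t + (1 / 2) * k x t ^ 3 with hβ
  set W : ℝ → ℝ → EuclideanSpace ℝ (Fin 2) :=
    fun x t => (-(β x t)) • colv g 1 x t with hWdef
  -- matrix identities
  have hgg : ∀ x t, g x t * (g x t)ᵀ = 1 := fun x t =>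
    mul_eq_one_comm.mp (hSO x t).1
  have hmdx : ∀ x t, mdx g x t = g x t * !![0, -(k x t); k x t, 0] := by
    intro x t
    calc mdx g x t = (g x t * (g x t)ᵀ) * mdx g x t := by rw [hgg, one_mul]
    _ = g x t * ((g x t)ᵀ * mdx g x t) := by rw [Matrix.mul_assoc]
    _ = _ := by rw [hgx x t]
  have hmdt : ∀ x t, mdt g x t = g x t * !![0, β x t; -(β x t), 0] := by
    intro x t
    calc mdt g x t = (g x t * (g x t)ᵀ) * mdt g x t := by rw [hgg, one_mul]
    _ = g x t * ((g x t)ᵀ * mdt g x t) := by rw [Matrix.mul_assoc]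
    _ = _ := by rw [hgt x t]
  -- scalar derivative facts
  have hkx : ∀ x t, HasDerivAt (fun x' => k x' t) (pdx k x t) x := hasDerivAt_pdx hk
  have hkxC : ContDiff ℝ (⊤ : ℕ∞) fun p : ℝ × ℝ => pdx k p.1 p.2 := contDiff_pdx hk
  have hkxx : ∀ x t, HasDerivAt (fun x' => pdx k x' t) (pdx (pdx k) x t) x :=
    hasDerivAt_pdx hkxC
  have hkxxC : ContDiff ℝ (⊤ : ℕ∞) fun p : ℝ × ℝ => pdx (pdx k) p.1 p.2 := contDiff_pdx hkxC
  -- entrywise derivative facts for g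
  have hgx0 : ∀ x t i, HasDerivAt (fun x' => g x' t i 0) (k x t * g x t i 1) x := by
    intro x t i
    have h := hasDerivAt_pdx (F := fun a b => g a b i 0) (hg i 0) x t
    have he : pdx (fun a b => g a b i 0) x t = k x t * g x t i 1 := by
      have h0 : (mdx g x t) i 0 = (g x t * !![0, -(k x t); k x t, 0]) i 0 := by
        rw [hmdx]
      simpa [mdx, pdx, Matrix.mul_apply, Fin.sum_univ_two, mul_comm] using h0
    rwa [he] at h
  have hgx1 : ∀ x t i, HasDerivAt (fun x' => g x' t i 1) (-(k x t) * g x t i 0) x := by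
    intro x t i
    have h := hasDerivAt_pdx (F := fun a b => g a b i 1) (hg i 1) x t
    have he : pdx (fun a b => g a b i 1) x t = -(k x t) * g x t i 0 := by
      have h0 : (mdx g x t) i 1 = (g x t * !![0, -(k x t); k x t, 0]) i 1 := by
        rw [hmdx]
      simpa [mdx, pdx, Matrix.mul_apply, Fin.sum_univ_two, mul_comm] using h0
    rwa [he] at h
  have hgt0 : ∀ x t i, HasDerivAt (fun t' => g x t' i 0) (-(β x t) * g x t i 1) t := by
    intro x t i
    have h := hasDerivAt_pdt (F := fun a b => g a b i 0) (hg i 0) x t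
    have he : pdt (fun a b => g a b i 0) x t = -(β x t) * g x t i 1 := by
      have h0 : (mdt g x t) i 0 = (g x t * !![0, β x t; -(β x t), 0]) i 0 := by
        rw [hmdt]
      simpa [mdt, pdt, Matrix.mul_apply, Fin.sum_univ_two, mul_comm] using h0
    rwa [he] at h
  -- vector-valued derivative facts
  have hE1x : ∀ x t, HasDerivAt (fun x' => colv g 0 x' t) (k x t • colv g 1 x t) x := by
    intro x t
    apply hasDerivAt_euclidean
    intro i
    exact hgx0 x t i
  have hE1t : ∀ x t, HasDerivAt (fun t' => colv g 0 x t') (W x t) t := by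
    intro x t
    apply hasDerivAt_euclidean
    intro i
    exact hgt0 x t i
  have hZx : ∀ x t, HasDerivAt (fun x' => Z x' t) (W x t) x := by
    intro x t
    have hfun : (fun x' => Z x' t)
        = fun x' => -(((k x' t) ^ 2 / 2) • colv g 0 x' t + pdx k x' t • colv g 1 x' t) :=
      funext fun x' => hZ x' t
    rw [hfun]
    apply hasDerivAt_euclidean
    intro i
    have hd := (((((hkx x t).pow 2).div_const 2).mul (hgx0 x t i)).add
      ((hkxx x t).mul (hgx1 x t i))).neg
    convert hd using 1
    show (-(β x t)) * g x t i 1 = _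
    rw [hβ]
    simp only [Pi.pow_apply]
    ring
    rfl
    rfl
    funext y
    simp [colv]
  -- continuity facts
  have hgC : ∀ i j, Continuous fun p : ℝ × ℝ => g p.1 p.2 i j := fun i j => (hg i j).continuous
  have hβC : Continuous fun p : ℝ × ℝ => β p.1 p.2 := by
    exact hkxxC.continuous.add (continuous_const.mul (hk.continuous.pow 3))
  have hWC : Continuous fun p : ℝ × ℝ => W p.1 p.2 := by
    apply continuous_euclidean
    intro i
    exact hβC.neg.mul (hgC i 1)
  have hZC : Continuous fun p : ℝ × ℝ => Z p.1 p.2 := by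
    have hfun : (fun p : ℝ × ℝ => Z p.1 p.2)
        = fun p : ℝ × ℝ =>
          -(((k p.1 p.2) ^ 2 / 2) • colv g 0 p.1 p.2 + pdx k p.1 p.2 • colv g 1 p.1 p.2) :=
      funext fun p => hZ p.1 p.2
    rw [hfun]
    apply continuous_euclidean
    intro i
    exact (((hk.continuous.pow 2).div_const 2).mul (hgC i 0)).add
      (hkxC.continuous.mul (hgC i 1)) |>.neg
  have hE1C : Continuous fun p : ℝ × ℝ => colv g 0 p.1 p.2 := by
    apply continuous_euclidean
    intro i
    exact hgC i 0
  -- second bullet: γ_x = e₁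
  have b2 : ∀ x t, HasDerivAt (fun x' => γ x' t) (colv g 0 x t) x := by
    intro x t
    have hcont : Continuous fun s => colv g 0 s t :=
      hE1C.comp (continuous_id.prodMk continuous_const)
    have hfun : (fun x' => γ x' t)
        = fun x' => (∫ s in (0 : ℝ)..t, Z 0 s) + ∫ s in (0 : ℝ)..x', colv g 0 s t :=
      funext fun x' => hγ x' t
    rw [hfun]
    have hint : HasDerivAt (fun x' => ∫ s in (0 : ℝ)..x', colv g 0 s t) (colv g 0 x t) x :=
      intervalIntegral.integral_hasDerivAt_right (hcont.intervalIntegrable _ _)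
        (hcont.stronglyMeasurableAtFilter _ _) hcont.continuousAt
    exact hint.const_add _
  -- first bullet: γ_t = Z
  have b1 : ∀ x t, HasDerivAt (fun t' => γ x t') (Z x t) t := by
    intro x t
    have hWs : ∀ t', Continuous fun s => W s t' := fun t' =>
      hWC.comp (continuous_id.prodMk continuous_const)
    have hIW : ∫ s in (0 : ℝ)..x, W s t = Z x t - Z 0 t :=
      intervalIntegral.integral_eq_sub_of_hasDerivAt (fun s _ => hZx s t)
        ((hWs t).intervalIntegrable _ _)
    -- bound on a compact neighborhood
    obtain ⟨C, hC⟩ := ((isCompact_uIcc (a := (0:ℝ)) (b := x)).prod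
      (isCompact_Icc (a := t - 1) (b := t + 1))).exists_bound_of_continuousOn hWC.continuousOn
    have hmain : HasDerivAt (fun t' => ∫ s in (0 : ℝ)..x, colv g 0 s t')
        (∫ s in (0 : ℝ)..x, W s t) t := by
      have h := (intervalIntegral.hasDerivAt_integral_of_dominated_loc_of_deriv_le
        (μ := MeasureTheory.volume) (F := fun t' s => colv g 0 s t') (F' := fun t' s => W s t') (x₀ := t)
        (bound := fun _ => C) (a := 0) (b := x) (Metric.ball_mem_nhds t one_pos)
        (Filter.Eventually.of_forall fun t' =>
          ((hE1C.comp (continuous_id.prodMk continuous_const)).aestronglyMeasurable))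
        ((hE1C.comp (continuous_id.prodMk continuous_const)).intervalIntegrable _ _)
        ((hWs t).aestronglyMeasurable)
        (Filter.Eventually.of_forall fun s hs t' ht' => by
          refine hC (s, t') ⟨Set.Ioc_subset_Icc_self hs, ?_⟩
          rw [Real.ball_eq_Ioo] at ht'
          exact Set.Ioo_subset_Icc_self ht')
        (intervalIntegrable_const)
        (Filter.Eventually.of_forall fun s _ t' _ => hE1t s t')).2
      exact h
    have hfun : (fun t' => γ x t')
        = fun t' => (∫ s in (0 : ℝ)..t', Z 0 s) + ∫ s in (0 : ℝ)..x, colv g 0 s t' :=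
      funext fun t' => hγ x t'
    rw [hfun]
    have hZ0cont : Continuous fun s => Z 0 s :=
      hZC.comp (continuous_const.prodMk continuous_id)
    have hfirst : HasDerivAt (fun t' => ∫ s in (0 : ℝ)..t', Z 0 s) (Z 0 t) t :=
      intervalIntegral.integral_hasDerivAt_right (hZ0cont.intervalIntegrable _ _)
        (hZ0cont.stronglyMeasurableAtFilter _ _) hZ0cont.continuousAt
    have := hfirst.add hmain
    rw [hIW] at this
    convert this using 1
    · rfl
    · rfl
    · rfl
    · rfl
    abel
  refine ⟨b1, b2, ?_, ?_⟩
  · intro x t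
    rw [(b2 x t).deriv, EuclideanSpace.norm_eq]
    have h1 := (hSO x t).1
    have h00 : ((g x t)ᵀ * g x t) 0 0 = (1 : Matrix (Fin 2) (Fin 2) ℝ) 0 0 := by rw [h1]
    simp only [Matrix.mul_apply, Fin.sum_univ_two, Matrix.transpose_apply,
      Matrix.one_apply_eq] at h00
    have : ∑ i : Fin 2, ‖colv g 0 x t i‖ ^ 2 = 1 := by
      simp only [Fin.sum_univ_two, Real.norm_eq_abs, sq_abs, colv]
      nlinarith [h00]
    rw [this, Real.sqrt_one]
  · intro x t
    exact (hE1x x t).deriv
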